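/- Let N ∈ {2,3}. There exists a function v ∈ C²_c(B^N \ {0}) (twice continuously differentiable with compact support in the punctured unit ball) such that ∫_{B^N} [ (Δv)² − ((N−1)/|x|²) |∇v|² ] dx < 0. -/

import Mathlib

open MeasureTheory Metric Set

noncomputable section

/-- `ℝ^N` with the Euclidean structure. -/
abbrev Euc (N : ℕ) : Type := EuclideanSpace ℝ (Fin N)

/-- The surface measure `σ` on the unit sphere `S^{N-1} ⊆ ℝ^N`. -/
def sphMeasure (N : ℕ) : Measure (Metric.sphere (0 : Euc N) 1) :=
  (volume : Measure (Euc N)).toSphere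

/-- The Laplacian `Δ v` of a scalar function on `ℝ^N`. -/
def lap {N : ℕ} (v : Euc N → ℝ) (x : Euc N) : ℝ :=
  ∑ i : Fin N, fderiv ℝ (fun y => fderiv ℝ v y (EuclideanSpace.single i 1)) x
    (EuclideanSpace.single i 1)

/-- The squared Frobenius norm `|∇U|²` of the differential of a map `U`. -/
def gradSq {N M : ℕ} (U : Euc N → Euc M) (x : Euc N) : ℝ :=
  ∑ i : Fin N, ‖fderiv ℝ U x (EuclideanSpace.single i 1)‖ ^ 2

/-!
Test with `v = xᵢ φ(|x|²)`. Summed over `i`, the integrand becomes a radial function of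
`s = |x|²`. Writing `φ(s) = s^{b/2} K(-log s)` with `b = (2 - N)/2`, the substitution
`u = -log s` turns the radial integral into `½ ∫ P(K, K', K'') du` for a quadratic form `P`, with
no weight left. For a plateau `K` that rises on `[1, 2]`, equals `1` on `[2, L - 1]` and falls
on `[L - 1, L]`, the two ramps contribute constants independent of `L` and the plateau contributes
`(L - 3) P(1, 0, 0)`. For `N = 2, 3`, `P(1, 0, 0)` is `-2` and `-47/16` respectively, so a long
plateau makes the summed integral negative, hence also the integral for some single `i`.
-/

open Filter Topology InnerProductSpace Real

variable {N : ℕ}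

def coordMulRadial (φ : ℝ → ℝ) (i : Fin N) : Euc N → ℝ := fun x => x i * φ (‖x‖ ^ 2)

def hardyIntegrand (v : Euc N → ℝ) (x : Euc N) : ℝ :=
  lap v x ^ 2 - ((N : ℝ) - 1) / ‖x‖ ^ 2 * ‖gradient v x‖ ^ 2

def hardyRadial (n : ℝ) (φ : ℝ → ℝ) (s : ℝ) : ℝ :=
  s * (2 * (n + 2) * deriv φ s + 4 * s * deriv (deriv φ) s) ^ 2
    - (n - 1) * (n * φ s ^ 2 + 4 * s * φ s * deriv φ s + 4 * s ^ 2 * deriv φ s ^ 2) / s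

lemma hasFDerivAt_comp_norm_sq {E : Type*} [NormedAddCommGroup E] [InnerProductSpace ℝ E]
    {ψ : ℝ → ℝ} {x : E} (hψ : DifferentiableAt ℝ ψ (‖x‖ ^ 2)) :
    HasFDerivAt (fun y => ψ (‖y‖ ^ 2)) ((2 * deriv ψ (‖x‖ ^ 2)) • innerSL ℝ x) x := by
  refine (hψ.hasDerivAt.comp_hasFDerivAt x
    (hasStrictFDerivAt_norm_sq x).hasFDerivAt).congr_fderiv ?_
  ext
  simp only [smul_apply, coe_innerSL_apply, nsmul_eq_mul, Nat.cast_ofNat, smul_eq_mul]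
  ring

section CoordMulRadial

variable {φ : ℝ → ℝ} (i : Fin N)

lemma fderiv_coordMulRadial_apply (hφ : Differentiable ℝ φ) (x h : Euc N) :
    fderiv ℝ (coordMulRadial φ i) x h
      = h i * φ (‖x‖ ^ 2) + 2 * x i * ⟪x, h⟫_ℝ * deriv φ (‖x‖ ^ 2) := by
  have := ((EuclideanSpace.proj i : Euc N →L[ℝ] ℝ).hasFDerivAt (x := x)).mul
    (hasFDerivAt_comp_norm_sq (hφ (‖x‖ ^ 2)))
  unfold coordMulRadial
  rw [HasFDerivAt.fderiv (f := fun y : Euc N => y i * φ (‖y‖ ^ 2)) this]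
  simp only [PiLp.proj_apply, add_apply, smul_apply, coe_innerSL_apply, smul_eq_mul]
  ring

lemma gradient_coordMulRadial (hφ : Differentiable ℝ φ) (x : Euc N) :
    gradient (coordMulRadial φ i) x
      = φ (‖x‖ ^ 2) • EuclideanSpace.single i 1 + (2 * x i * deriv φ (‖x‖ ^ 2)) • x := by
  rw [gradient, LinearIsometryEquiv.symm_apply_eq]
  ext h
  simp only [fderiv_coordMulRadial_apply i hφ, map_add, map_smul, add_apply, smul_apply,
    toDual_apply_apply, EuclideanSpace.inner_single_left, Real.ringHom_apply, one_mul, smul_eq_mul]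
  ring

lemma fderiv_fderiv_coordMulRadial_apply (hφ : Differentiable ℝ φ)
    (hφ' : Differentiable ℝ (deriv φ)) (x h k : Euc N) :
    fderiv ℝ (fun y => fderiv ℝ (coordMulRadial φ i) y h) x k
      = 2 * (h i * ⟪x, k⟫_ℝ + k i * ⟪x, h⟫_ℝ + x i * ⟪k, h⟫_ℝ) * deriv φ (‖x‖ ^ 2)
        + 4 * x i * ⟪x, h⟫_ℝ * ⟪x, k⟫_ℝ * deriv (deriv φ) (‖x‖ ^ 2) := by
  simp_rw [fderiv_coordMulRadial_apply i hφ]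
  have hcoord := (EuclideanSpace.proj i : Euc N →L[ℝ] ℝ).hasFDerivAt (x := x)
  have hinner : HasFDerivAt (fun y : Euc N => ⟪y, h⟫_ℝ) (innerSL ℝ h) x :=
    (innerSL ℝ h).hasFDerivAt.congr_of_eventuallyEq (.of_forall fun y => real_inner_comm _ _)
  have := ((hasFDerivAt_comp_norm_sq (hφ (‖x‖ ^ 2))).const_mul (h i)).add
    (((hcoord.const_mul 2).mul hinner).mul (hasFDerivAt_comp_norm_sq (hφ' (‖x‖ ^ 2))))
  rw [HasFDerivAt.fderiv (f := fun y : Euc N =>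
    h i * φ (‖y‖ ^ 2) + 2 * y i * ⟪y, h⟫_ℝ * deriv φ (‖y‖ ^ 2)) this]
  simp only [PiLp.proj_apply, real_inner_comm, Pi.mul_apply, smul_add, add_apply, smul_apply,
    coe_innerSL_apply, smul_eq_mul]
  ring

lemma lap_coordMulRadial (hφ : Differentiable ℝ φ) (hφ' : Differentiable ℝ (deriv φ))
    (x : Euc N) :
    lap (coordMulRadial φ i) x
      = x i * (2 * ((N : ℝ) + 2) * deriv φ (‖x‖ ^ 2)
          + 4 * ‖x‖ ^ 2 * deriv (deriv φ) (‖x‖ ^ 2)) := by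
  have hsum : ∑ j, 4 * x i * x j * x j = 4 * x i * ‖x‖ ^ 2 := by
    rw [EuclideanSpace.norm_sq_eq]
    simp [Finset.mul_sum, mul_assoc, sq]
  simp only [lap, fderiv_fderiv_coordMulRadial_apply i hφ hφ', EuclideanSpace.inner_single_right,
    PiLp.single_apply, Real.ringHom_apply, one_mul, ite_mul, zero_mul, mul_one,
    Finset.sum_add_distrib, ← Finset.sum_mul, ← Finset.mul_sum, Finset.sum_ite_eq,
    Finset.mem_univ, if_true, Finset.sum_const, Finset.card_univ, Fintype.card_fin, nsmul_eq_mul,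
    hsum]
  ring

lemma norm_gradient_coordMulRadial_sq (hφ : Differentiable ℝ φ) (x : Euc N) :
    ‖gradient (coordMulRadial φ i) x‖ ^ 2
      = φ (‖x‖ ^ 2) ^ 2 + 4 * x i ^ 2 * φ (‖x‖ ^ 2) * deriv φ (‖x‖ ^ 2)
        + 4 * x i ^ 2 * ‖x‖ ^ 2 * deriv φ (‖x‖ ^ 2) ^ 2 := by
  rw [gradient_coordMulRadial i hφ, norm_add_sq_real]
  simp only [norm_smul, Real.norm_eq_abs, PiLp.norm_single, norm_one, mul_one, sq_abs,
    inner_smul_right, inner_smul_left, Real.ringHom_apply, EuclideanSpace.inner_single_left,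
    one_mul, norm_mul, mul_pow]
  ring

lemma sum_hardyIntegrand_coordMulRadial (hφ : Differentiable ℝ φ)
    (hφ' : Differentiable ℝ (deriv φ)) (x : Euc N) :
    ∑ i, hardyIntegrand (coordMulRadial φ i) x = hardyRadial N φ (‖x‖ ^ 2) := by
  set s := ‖x‖ ^ 2 with hs
  set A := 2 * ((N : ℝ) + 2) * deriv φ s + 4 * s * deriv (deriv φ) s
  have hnorm : ∑ i, x i ^ 2 = s := by simp [hs, EuclideanSpace.norm_sq_eq]
  have hterm : ∀ i, hardyIntegrand (coordMulRadial φ i) x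
      = x i ^ 2 * (A ^ 2 - ((N : ℝ) - 1) / s * (4 * φ s * deriv φ s + 4 * s * deriv φ s ^ 2))
        - ((N : ℝ) - 1) / s * φ s ^ 2 := fun i => by
    rw [hardyIntegrand, lap_coordMulRadial _ hφ hφ', norm_gradient_coordMulRadial_sq _ hφ]
    ring
  simp only [hterm, Finset.sum_sub_distrib, ← Finset.sum_mul, hnorm, Finset.sum_const,
    Finset.card_univ, Fintype.card_fin, nsmul_eq_mul, hardyRadial]
  rcases eq_or_ne s 0 with h | h
  · simp [h]
  · field_simp
    ring

variable {i}

lemma hardyIntegrand_coordMulRadial_eq_zero {x : Euc N} (hx : ‖x‖ ^ 2 ∉ tsupport φ)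
    (hφ : Differentiable ℝ φ) (hφ' : Differentiable ℝ (deriv φ)) :
    hardyIntegrand (coordMulRadial φ i) x = 0 := by
  have h2 : deriv (deriv φ) (‖x‖ ^ 2) = 0 :=
    deriv_of_notMem_tsupport fun h => hx (tsupport_deriv_subset h)
  simp [hardyIntegrand, lap_coordMulRadial _ hφ hφ', norm_gradient_coordMulRadial_sq _ hφ,
    image_eq_zero_of_notMem_tsupport hx, deriv_of_notMem_tsupport hx, h2]

lemma continuousOn_hardyIntegrand_coordMulRadial (hφ : ContDiff ℝ 2 φ) :
    ContinuousOn (hardyIntegrand (coordMulRadial φ i)) {0}ᶜ := by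
  have hd := hφ.differentiable two_ne_zero
  have hd' := hφ.differentiable_deriv_two
  have : ContDiff ℝ 1 (deriv φ) := hφ.iterate_deriv' 1 1
  have := hφ.continuous
  have hlap : Continuous (lap (coordMulRadial φ i)) := by
    rw [funext (lap_coordMulRadial i hd hd')]
    fun_prop
  have hgrad : Continuous (gradient (coordMulRadial φ i)) := by
    rw [funext (gradient_coordMulRadial i hd)]
    fun_prop
  unfold hardyIntegrand
  fun_prop (disch := intro x hx; simpa using hx)

lemma tsupport_coordMulRadial_subset {a c : ℝ} (hsupp : tsupport φ ⊆ Icc a c) :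
    tsupport (coordMulRadial φ i) ⊆ (fun x : Euc N => ‖x‖ ^ 2) ⁻¹' Icc a c :=
  closure_minimal (fun _ hx => hsupp (subset_tsupport _ (right_ne_zero_of_mul hx)))
    (isClosed_Icc.preimage (by fun_prop))

end CoordMulRadial

lemma hardyRadial_eq_zero {n : ℝ} {φ : ℝ → ℝ} {s : ℝ} (hs : s ∉ tsupport φ) :
    hardyRadial n φ s = 0 := by
  have h2 : deriv (deriv φ) s = 0 := deriv_of_notMem_tsupport fun h => hs (tsupport_deriv_subset h)
  simp [hardyRadial, image_eq_zero_of_notMem_tsupport hs, deriv_of_notMem_tsupport hs, h2]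

section Shell

variable {E : Type*} [NormedAddCommGroup E] {a c : ℝ}

lemma preimage_norm_sq_Icc_subset (ha : 0 < a) (hc : c < 1) :
    (fun x : E => ‖x‖ ^ 2) ⁻¹' Icc a c ⊆ ball 0 1 \ {0} := by
  rintro x ⟨hxa, hxc⟩
  refine ⟨?_, ?_⟩
  · rw [mem_ball_zero_iff]
    nlinarith [norm_nonneg x]
  · rintro rfl
    simp at hxa
    linarith

lemma isCompact_preimage_norm_sq_Icc [ProperSpace E] (ha : 0 < a) (hc : c < 1) :
    IsCompact ((fun x : E => ‖x‖ ^ 2) ⁻¹' Icc a c) :=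
  (isCompact_closedBall 0 1).of_isClosed_subset (isClosed_Icc.preimage (by fun_prop))
    ((preimage_norm_sq_Icc_subset ha hc).trans (sdiff_subset.trans ball_subset_closedBall))

end Shell

lemma exists_integral_hardyIntegrand_neg_of_integral_hardyRadial_neg {φ : ℝ → ℝ} {a c : ℝ}
    (hN : 0 < N) (hφ : ContDiff ℝ 2 φ) (ha : 0 < a) (hc : c < 1) (hsupp : tsupport φ ⊆ Icc a c)
    (hneg : ∫ y in Ioi (0 : ℝ), y ^ (N - 1) * hardyRadial N φ (y ^ 2) < 0) :
    ∃ v : Euc N → ℝ, ContDiff ℝ 2 v ∧ HasCompactSupport v ∧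
      tsupport v ⊆ ball (0 : Euc N) 1 \ {0} ∧
      ∫ x in ball (0 : Euc N) 1, hardyIntegrand v x < 0 := by
  have : Nontrivial (Euc N) := Module.nontrivial_of_finrank_pos (R := ℝ) (by simpa using hN)
  have hd := hφ.differentiable two_ne_zero
  have hd' := hφ.differentiable_deriv_two
  set A := (fun x : Euc N => ‖x‖ ^ 2) ⁻¹' Icc a c
  have hA : A ⊆ ball 0 1 \ {0} := preimage_norm_sq_Icc_subset ha hc
  have hvanish : ∀ x ∉ A, ‖x‖ ^ 2 ∉ tsupport φ := fun x hx h => hx (hsupp h)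
  have hint : ∀ i, IntegrableOn (hardyIntegrand (coordMulRadial φ i)) (ball (0 : Euc N) 1) :=
    fun i => ((continuousOn_hardyIntegrand_coordMulRadial hφ).mono
      (hA.trans (sdiff_subset_compl _ _))).integrableOn_compact
        (isCompact_preimage_norm_sq_Icc ha hc)
      |>.of_forall_sdiff_eq_zero measurableSet_ball
        fun x hx => hardyIntegrand_coordMulRadial_eq_zero (hvanish x hx.2) hd hd'
  have hsum : ∑ i, ∫ x in ball (0 : Euc N) 1, hardyIntegrand (coordMulRadial φ i) x < 0 := by
    rw [← integral_finsetSum _ fun i _ => hint i]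
    simp_rw [sum_hardyIntegrand_coordMulRadial hd hd']
    rw [setIntegral_eq_integral_of_forall_compl_eq_zero
        fun x hx => hardyRadial_eq_zero (hvanish x fun h => hx (hA h).1),
      integral_fun_norm_addHaar volume (fun r => hardyRadial N φ (r ^ 2)),
      finrank_euclideanSpace_fin, nsmul_eq_mul, smul_eq_mul]
    refine mul_neg_of_pos_of_neg (by positivity) (mul_neg_of_pos_of_neg ?_ (by simpa using hneg))
    exact ENNReal.toReal_pos (measure_ball_pos volume 0 one_pos).ne' measure_ball_lt_top.ne
  obtain ⟨i, -, hi⟩ := Finset.exists_lt_of_sum_lt (hsum.trans_eq Finset.sum_const_zero.symm)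
  exact ⟨coordMulRadial φ i,
    (EuclideanSpace.proj i : Euc N →L[ℝ] ℝ).contDiff.mul (hφ.comp (contDiff_norm_sq ℝ)),
    (isCompact_preimage_norm_sq_Icc ha hc).of_isClosed_subset (isClosed_tsupport _)
      (tsupport_coordMulRadial_subset hsupp),
    (tsupport_coordMulRadial_subset hsupp).trans hA, hi⟩

def logProfile (Φ : ℝ → ℝ) (s : ℝ) : ℝ := if 0 < s then Φ (-log s) else 0

def logHardyIntegrand (n : ℝ) (Φ : ℝ → ℝ) (u : ℝ) : ℝ :=
  (4 * deriv (deriv Φ) u - 2 * n * deriv Φ u) ^ 2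
    - (n - 1) * (n * Φ u ^ 2 - 4 * Φ u * deriv Φ u + 4 * deriv Φ u ^ 2)

section LogProfile

variable {Φ : ℝ → ℝ} {l L s : ℝ}

lemma logProfile_eventuallyEq (hs : 0 < s) :
    logProfile Φ =ᶠ[𝓝 s] fun t => Φ (-log t) :=
  (eventually_gt_nhds hs).mono fun _ ht => if_pos ht

lemma tsupport_logProfile_subset (hΦ : tsupport Φ ⊆ Icc l L) :
    tsupport (logProfile Φ) ⊆ Icc (exp (-L)) (exp (-l)) := by
  refine closure_minimal (fun s hs => ?_) isClosed_Icc
  have hpos : 0 < s := by by_contra h; exact hs (if_neg h)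
  have hmem := hΦ (subset_tsupport _ (by rwa [Function.mem_support, logProfile, if_pos hpos] at hs))
  rw [← Real.exp_log hpos]
  exact ⟨Real.exp_le_exp.2 (by linarith [hmem.2]), Real.exp_le_exp.2 (by linarith [hmem.1])⟩

lemma contDiff_logProfile {n : ℕ∞} (hΦ : ContDiff ℝ n Φ) (hsupp : tsupport Φ ⊆ Icc l L) :
    ContDiff ℝ n (logProfile Φ) := by
  refine contDiff_iff_contDiffAt.2 fun s => ?_
  rcases lt_or_ge s (exp (-L)) with hs | hs
  · refine contDiffAt_const.congr_of_eventuallyEq (notMem_tsupport_iff_eventuallyEq.1 ?_)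
    exact fun h => hs.not_ge (tsupport_logProfile_subset hsupp h).1
  · have hpos := (Real.exp_pos _).trans_le hs
    exact (hΦ.contDiffAt.comp s (Real.contDiffAt_log.2 hpos.ne').neg).congr_of_eventuallyEq
      (logProfile_eventuallyEq hpos)

lemma deriv_logProfile (hΦ : Differentiable ℝ Φ) (hs : 0 < s) :
    deriv (logProfile Φ) s = -deriv Φ (-log s) / s := by
  rw [(logProfile_eventuallyEq hs).deriv_eq]
  refine ((hΦ _).hasDerivAt.comp s (Real.hasDerivAt_log hs.ne').neg).deriv.trans ?_
  simp only [Pi.neg_apply]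
  field_simp

lemma deriv_deriv_logProfile (hΦ : Differentiable ℝ Φ) (hΦ' : Differentiable ℝ (deriv Φ))
    (hs : 0 < s) :
    deriv (deriv (logProfile Φ)) s
      = (deriv Φ (-log s) + deriv (deriv Φ) (-log s)) / s ^ 2 := by
  have heq : deriv (logProfile Φ) =ᶠ[𝓝 s] fun t => -deriv Φ (-log t) / t :=
    (eventually_gt_nhds hs).mono fun t ht => deriv_logProfile hΦ ht
  rw [heq.deriv_eq]
  refine ((((hΦ' _).hasDerivAt.comp s (Real.hasDerivAt_log hs.ne').neg).neg.div
    (hasDerivAt_id s) hs.ne').deriv).trans ?_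
  simp only [Pi.neg_apply, Function.comp_apply, id]
  field_simp
  ring

lemma hardyRadial_logProfile (n : ℝ) (hΦ : Differentiable ℝ Φ)
    (hΦ' : Differentiable ℝ (deriv Φ)) (hs : 0 < s) :
    hardyRadial n (logProfile Φ) s = logHardyIntegrand n Φ (-log s) / s := by
  rw [hardyRadial, logHardyIntegrand, deriv_logProfile hΦ hs, deriv_deriv_logProfile hΦ hΦ' hs,
    logProfile, if_pos hs]
  field_simp
  ring

lemma image_exp_neg_half_univ : (fun u : ℝ => exp (-u / 2)) '' univ = Ioi 0 := by
  refine (image_univ.trans ?_)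
  ext y
  refine ⟨fun ⟨u, hu⟩ => hu ▸ Real.exp_pos _, fun hy => ⟨-2 * log y, ?_⟩⟩
  simp [Real.exp_log (show 0 < y from hy)]

lemma integral_Ioi_hardyRadial_logProfile (hN : 1 ≤ N) (hΦ : Differentiable ℝ Φ)
    (hΦ' : Differentiable ℝ (deriv Φ)) :
    ∫ y in Ioi (0 : ℝ), y ^ (N - 1) * hardyRadial N (logProfile Φ) (y ^ 2)
      = 2⁻¹ * ∫ u, exp ((2 - N) / 2 * u) * logHardyIntegrand N Φ u := by
  have hderiv : ∀ u : ℝ, HasDerivAt (fun u : ℝ => exp (-u / 2)) (exp (-u / 2) * (-1 / 2)) u :=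
    fun u => by simpa using ((hasDerivAt_neg u).div_const 2).exp
  rw [← image_exp_neg_half_univ, integral_image_eq_integral_abs_deriv_smul MeasurableSet.univ
    (fun u _ => (hderiv u).hasDerivWithinAt) (fun u _ v _ h => by simpa using h),
    Measure.restrict_univ, ← integral_const_mul]
  congr 1 with u
  have hsq : exp (-u / 2) ^ 2 = exp (-u) := by rw [← Real.exp_nat_mul]; ring_nf
  have hpow : exp (-u / 2) ^ (N - 1) = exp (((N : ℝ) - 1) * (-u / 2)) := by
    rw [← Real.exp_nat_mul, Nat.cast_sub hN, Nat.cast_one]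
  have hexp : exp (-u / 2) * exp (((N : ℝ) - 1) * (-u / 2)) * exp u
      = exp ((2 - N) / 2 * u) := by
    rw [← Real.exp_add, ← Real.exp_add]; ring_nf
  rw [hsq, hpow, hardyRadial_logProfile _ hΦ hΦ' (Real.exp_pos _), Real.log_exp, neg_neg,
    Real.exp_neg u, div_inv_eq_mul, abs_mul, abs_of_pos (Real.exp_pos _), smul_eq_mul]
  norm_num
  linear_combination logHardyIntegrand N Φ u / 2 * hexp

end LogProfile

def weightedHardyIntegrand (n b : ℝ) (K : ℝ → ℝ) (u : ℝ) : ℝ :=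
  (4 * (deriv (deriv K) u - b * deriv K u + b ^ 2 / 4 * K u)
      - 2 * n * (deriv K u - b / 2 * K u)) ^ 2
    - (n - 1) * (n * K u ^ 2 - 4 * K u * (deriv K u - b / 2 * K u)
      + 4 * (deriv K u - b / 2 * K u) ^ 2)

section Weighted

variable {K : ℝ → ℝ}

lemma deriv_exp_mul_mul (c : ℝ) (hK : Differentiable ℝ K) :
    deriv (fun u => exp (c * u) * K u) = fun u => exp (c * u) * (deriv K u + c * K u) :=
  funext fun u => by
    refine (((hasDerivAt_id u).const_mul c).exp.mul (hK u).hasDerivAt).deriv.trans ?_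
    simp only [id_eq, mul_one]
    ring

lemma exp_mul_logHardyIntegrand (n b : ℝ) (hK : Differentiable ℝ K)
    (hK' : Differentiable ℝ (deriv K)) (u : ℝ) :
    exp (b * u) * logHardyIntegrand n (fun u => exp (-(b / 2) * u) * K u) u
      = weightedHardyIntegrand n b K u := by
  have hK1 : Differentiable ℝ fun u => deriv K u + -(b / 2) * K u := hK'.add (hK.const_mul _)
  have he : exp (b * u) * exp (-(b / 2) * u) ^ 2 = 1 := by
    rw [← Real.exp_nat_mul, ← Real.exp_add]; ring_nf; exact Real.exp_zero
  calc _ = exp (b * u) * exp (-(b / 2) * u) ^ 2 * weightedHardyIntegrand n b K u := by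
        rw [logHardyIntegrand, deriv_exp_mul_mul _ hK, deriv_exp_mul_mul _ hK1]
        beta_reduce
        rw [deriv_fun_add (hK' u) ((hK u).const_mul _), deriv_const_mul _ (hK u),
          weightedHardyIntegrand]
        ring
    _ = _ := by rw [he, one_mul]

lemma continuous_weightedHardyIntegrand (n b : ℝ) (hK : ContDiff ℝ 2 K) :
    Continuous (weightedHardyIntegrand n b K) := by
  have : ContDiff ℝ 1 (deriv K) := hK.iterate_deriv' 1 1
  have := hK.continuous
  unfold weightedHardyIntegrand
  fun_prop

lemma weightedHardyIntegrand_eq_zero (n b : ℝ) {u : ℝ} (hu : u ∉ tsupport K) :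
    weightedHardyIntegrand n b K u = 0 := by
  have h2 : deriv (deriv K) u = 0 := deriv_of_notMem_tsupport fun h => hu (tsupport_deriv_subset h)
  simp [weightedHardyIntegrand, image_eq_zero_of_notMem_tsupport hu,
    deriv_of_notMem_tsupport hu, h2]

lemma Filter.EventuallyEq.weightedHardyIntegrand_eq {K' : ℝ → ℝ} {u : ℝ} (n b : ℝ)
    (h : K =ᶠ[𝓝 u] K') : weightedHardyIntegrand n b K u = weightedHardyIntegrand n b K' u := by
  simp only [weightedHardyIntegrand, h.eq_of_nhds, h.deriv_eq, h.deriv.deriv_eq]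

lemma weightedHardyIntegrand_comp_sub_const (n b a u : ℝ) :
    weightedHardyIntegrand n b (fun u => K (u - a)) u = weightedHardyIntegrand n b K (u - a) := by
  have h : deriv (fun u => K (u - a)) = fun u => deriv K (u - a) :=
    funext (deriv_comp_sub_const K a)
  simp only [weightedHardyIntegrand, h, deriv_comp_sub_const]

end Weighted

def plateau (L u : ℝ) : ℝ := smoothTransition (u - 1) * smoothTransition (L - u)

section Plateau

variable {L u : ℝ}

lemma contDiff_plateau {n : ℕ∞} : ContDiff ℝ n (plateau L) := by
  have := Real.smoothTransition.contDiff (n := n)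
  unfold plateau
  fun_prop

lemma tsupport_plateau_subset : tsupport (plateau L) ⊆ Icc 1 L := by
  refine closure_minimal (fun u hu => ?_) isClosed_Icc
  have h := mul_ne_zero_iff.1 hu
  simp only [ne_eq, Real.smoothTransition.zero_iff_nonpos, not_le, sub_pos] at h
  exact ⟨h.1.le, h.2.le⟩

lemma plateau_eventuallyEq_left (hu : u < L - 1) :
    plateau L =ᶠ[𝓝 u] fun w => smoothTransition (w - 1) :=
  (eventually_lt_nhds hu).mono fun w hw => by
    rw [plateau, Real.smoothTransition.one_of_one_le (x := L - w) (by linarith), mul_one]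

lemma plateau_eventuallyEq_right (hu : 2 < u) :
    plateau L =ᶠ[𝓝 u] fun w => smoothTransition (-(w - L)) :=
  (eventually_gt_nhds hu).mono fun w hw => by
    show _ = smoothTransition (-(w - L))
    rw [plateau, Real.smoothTransition.one_of_one_le (x := w - 1) (by linarith), one_mul, neg_sub]

lemma plateau_eventuallyEq_one (h₁ : 2 < u) (h₂ : u < L - 1) : plateau L =ᶠ[𝓝 u] fun _ => 1 :=
  (plateau_eventuallyEq_left h₂).trans <| (eventually_gt_nhds h₁).mono fun w hw =>
    Real.smoothTransition.one_of_one_le (by linarith)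

lemma integral_weightedHardyIntegrand_plateau (n b : ℝ) (hL : 3 < L) :
    ∫ u, weightedHardyIntegrand n b (plateau L) u
      = (∫ t in (0 : ℝ)..1, weightedHardyIntegrand n b smoothTransition t)
        + (L - 3) * ((b ^ 2 + n * b) ^ 2 - (n - 1) * (n + 2 * b + b ^ 2))
        + ∫ t in (-1 : ℝ)..0, weightedHardyIntegrand n b (fun t => smoothTransition (-t)) t := by
  have hint : ∀ a c : ℝ, IntervalIntegrable (weightedHardyIntegrand n b (plateau L)) volume a c :=
    fun a c => (continuous_weightedHardyIntegrand n b contDiff_plateau).intervalIntegrable a c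
  have hleft : ∫ u in (1 : ℝ)..2, weightedHardyIntegrand n b (plateau L) u
      = ∫ t in (0 : ℝ)..1, weightedHardyIntegrand n b smoothTransition t := by
    rw [intervalIntegral.integral_congr fun u hu => (plateau_eventuallyEq_left (by
        rw [uIcc_of_le one_le_two] at hu; linarith [hu.2])).weightedHardyIntegrand_eq n b]
    simp only [weightedHardyIntegrand_comp_sub_const]
    rw [intervalIntegral.integral_comp_sub_right (fun t => weightedHardyIntegrand n b _ t)]
    norm_num
  have hmiddle : ∫ u in (2 : ℝ)..(L - 1), weightedHardyIntegrand n b (plateau L) u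
      = (L - 3) * ((b ^ 2 + n * b) ^ 2 - (n - 1) * (n + 2 * b + b ^ 2)) := by
    rw [intervalIntegral.integral_of_le (by linarith), integral_Ioc_eq_integral_Ioo,
      setIntegral_congr_fun measurableSet_Ioo fun u hu =>
        (plateau_eventuallyEq_one hu.1 hu.2).weightedHardyIntegrand_eq n b]
    simp only [weightedHardyIntegrand, deriv_const', mul_zero, sub_zero, zero_add]
    rw [setIntegral_const, Real.volume_real_Ioo_of_le (by linarith), smul_eq_mul]
    ring
  have hright : ∫ u in (L - 1)..L, weightedHardyIntegrand n b (plateau L) u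
      = ∫ t in (-1 : ℝ)..0, weightedHardyIntegrand n b (fun t => smoothTransition (-t)) t := by
    rw [intervalIntegral.integral_congr fun u hu => ((plateau_eventuallyEq_right (by
        rw [uIcc_of_le (by linarith)] at hu; linarith [hu.1])).weightedHardyIntegrand_eq n b).trans
        (weightedHardyIntegrand_comp_sub_const (K := fun t => smoothTransition (-t)) n b L u)]
    rw [intervalIntegral.integral_comp_sub_right (fun t => weightedHardyIntegrand n b _ t)]
    norm_num
  rw [← setIntegral_eq_integral_of_forall_compl_eq_zero fun u hu =>
      weightedHardyIntegrand_eq_zero n b fun h => hu (tsupport_plateau_subset h),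
    integral_Icc_eq_integral_Ioc, ← intervalIntegral.integral_of_le (by linarith),
    ← intervalIntegral.integral_add_adjacent_intervals (hint 1 2) (hint 2 L),
    ← intervalIntegral.integral_add_adjacent_intervals (hint 2 (L - 1)) (hint (L - 1) L),
    hleft, hmiddle, hright]
  ring

end Plateau

theorem exists_negative_hardy_gradient_field
    {N : ℕ} (hN : N = 2 ∨ N = 3) :
    ∃ v : Euc N → ℝ, ContDiff ℝ 2 v ∧ HasCompactSupport v ∧
      tsupport v ⊆ ball (0 : Euc N) 1 \ {0} ∧
      (∫ x in ball (0 : Euc N) 1,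
        ((lap v x) ^ 2 - ((N : ℝ) - 1) / ‖x‖ ^ 2 * ‖gradient v x‖ ^ 2)) < 0 := by
  obtain ⟨b, hb⟩ : ∃ b : ℝ, (2 - N) / 2 = b := ⟨_, rfl⟩
  set q : ℝ := (b ^ 2 + N * b) ^ 2 - (N - 1) * (N + 2 * b + b ^ 2)
  set C : ℝ := (∫ t in (0 : ℝ)..1, weightedHardyIntegrand N b smoothTransition t)
    + ∫ t in (-1 : ℝ)..0, weightedHardyIntegrand N b (fun t => smoothTransition (-t)) t
  have hq : q < 0 := by rcases hN with rfl | rfl <;> norm_num [q, ← hb]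
  obtain ⟨L, hL, hCL⟩ : ∃ L : ℝ, 3 < L ∧ C + (L - 3) * q < 0 := by
    refine ⟨4 + |C| / -q, by linarith [div_nonneg (abs_nonneg C) (neg_nonneg.2 hq.le)], ?_⟩
    have : (4 + |C| / -q - 3) * q = q - |C| := by field_simp [hq.ne]; ring
    linarith [le_abs_self C]
  have hK : ContDiff ℝ 2 (plateau L) := contDiff_plateau
  have hΦ : ContDiff ℝ 2 fun u => exp (-(b / 2) * u) * plateau L u := by fun_prop
  have hsupp : tsupport (fun u => exp (-(b / 2) * u) * plateau L u) ⊆ Icc 1 L :=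
    (tsupport_mul_subset_right).trans tsupport_plateau_subset
  refine exists_integral_hardyIntegrand_neg_of_integral_hardyRadial_neg (by omega)
    (contDiff_logProfile hΦ hsupp) (Real.exp_pos _) (Real.exp_lt_one_iff.2 (by norm_num))
    (tsupport_logProfile_subset hsupp) ?_
  rw [integral_Ioi_hardyRadial_logProfile (by omega) (hΦ.differentiable two_ne_zero)
    hΦ.differentiable_deriv_two, hb]
  simp_rw [exp_mul_logHardyIntegrand _ _ (hK.differentiable two_ne_zero)
    hK.differentiable_deriv_two]
  rw [integral_weightedHardyIntegrand_plateau _ _ hL]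
  linarith
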